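/- Let F : ℝⁿ → ℝ be a smooth function, G a finite group of orthogonal linear maps on ℝⁿ such that F(g x) = F(x) for all g ∈ G and x ∈ ℝⁿ. If x is a point in the fixed subspace Fix(G) = {v : g v = v for all g ∈ G} and the restriction of F to Fix(G) has a critical point at x (i.e., the derivative of F along every direction in Fix(G) vanishes at x), then x is a critical point of F on all of ℝⁿ (the full gradient of F vanishes at x). -/

import Mathlib

/-- Principle of symmetric criticality (finite-dimensional): if a smooth `G`-invariant
function `F` on `ℝⁿ` restricted to the fixed subspace `Fix(G)` has a critical point at a
`G`-fixed point `x`, then `x` is a critical point of `F` on all of `ℝⁿ`. -/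
theorem symmetric_criticality (n : ℕ) (F : EuclideanSpace ℝ (Fin n) → ℝ)
    (hF : ContDiff ℝ (⊤ : ℕ∞) F)
    (G : Subgroup (EuclideanSpace ℝ (Fin n) ≃ₗᵢ[ℝ] EuclideanSpace ℝ (Fin n)))
    (hfin : Finite G)
    (hinv : ∀ g ∈ G, ∀ x, F (g x) = F x)
    (x : EuclideanSpace ℝ (Fin n)) (hx : ∀ g ∈ G, g x = x)
    (hcrit : ∀ v : EuclideanSpace ℝ (Fin n), (∀ g ∈ G, g v = v) → fderiv ℝ F x v = 0) :
    fderiv ℝ F x = 0 := by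
  classical
  have : Fintype G := Fintype.ofFinite G
  set L := fderiv ℝ F x with hL
  -- equivariance of the derivative
  have key : ∀ g ∈ G, ∀ v, L (g v) = L v := by
    intro g hg v
    have hFg : F ∘ g = F := funext (hinv g hg)
    have hdF : DifferentiableAt ℝ F (g x) :=
      (hF.differentiable (by simp)).differentiableAt
    have hdg : DifferentiableAt ℝ g x :=
      g.toContinuousLinearEquiv.differentiableAt
    have hcomp : fderiv ℝ (F ∘ g) x = (fderiv ℝ F (g x)).comp (fderiv ℝ (⇑g) x) :=
      fderiv_comp x hdF hdg
    have hgx : g x = x := hx g hg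
    have hfg : fderiv ℝ (⇑g) x = (g.toContinuousLinearEquiv : EuclideanSpace ℝ (Fin n) →L[ℝ] EuclideanSpace ℝ (Fin n)) :=
      g.toContinuousLinearEquiv.fderiv
    have : L = L.comp (g.toContinuousLinearEquiv : EuclideanSpace ℝ (Fin n) →L[ℝ] EuclideanSpace ℝ (Fin n)) := by
      conv_lhs => rw [hL, ← hFg]
      rw [hcomp, hgx, hfg, hL]
    calc L (g v) = (L.comp (g.toContinuousLinearEquiv : EuclideanSpace ℝ (Fin n) →L[ℝ] EuclideanSpace ℝ (Fin n))) v := rfl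
      _ = L v := by rw [← this]
  have hcard : (0:ℝ) < (Fintype.card G : ℝ) := by
    exact_mod_cast Fintype.card_pos
  ext v
  -- average of the orbit of v
  set w : EuclideanSpace ℝ (Fin n) :=
    ((Fintype.card G : ℝ))⁻¹ • ∑ g : G, (g : EuclideanSpace ℝ (Fin n) ≃ₗᵢ[ℝ] EuclideanSpace ℝ (Fin n)) v with hw
  have hwfix : ∀ g ∈ G, g w = w := by
    intro h hh
    rw [hw]
    have hsmul : ∀ (c : ℝ) (u : EuclideanSpace ℝ (Fin n)), h (c • u) = c • h u :=
      fun c u => h.map_smul c u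
    rw [hsmul, map_sum]
    congr 1
    refine Fintype.sum_equiv (Equiv.mulLeft (⟨h, hh⟩ : G)) _ _ ?_
    intro g
    simp [Subgroup.coe_mul, LinearIsometryEquiv.coe_mul]
  have hLw : L w = 0 := hcrit w hwfix
  have hLw' : L w = L v := by
    rw [hw, map_smul, map_sum]
    have : ∀ g : G, L ((g : EuclideanSpace ℝ (Fin n) ≃ₗᵢ[ℝ] EuclideanSpace ℝ (Fin n)) v) = L v :=
      fun g => key g g.2 v
    rw [Finset.sum_congr rfl (fun g _ => this g), Finset.sum_const, Finset.card_univ]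
    simp only [smul_eq_mul, nsmul_eq_mul]
    field_simp
  simp only [ContinuousLinearMap.zero_apply]
  rw [← hLw', hLw]
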